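/- arXiv:1307.2392 — 3 statements merged into one kernel-verified Lean document; each statement's English description precedes it below -/
import Mathlib

section
/- Let f ∈ C²((0,∞)) vanish for all ξ ≥ a (for some a > 0) and suppose there exist c > 0 and σ ∈ (-1,1) such that |f^{(k)}(ξ)| ≤ c·ξ^{σ-k} for all ξ > 0 and k ∈ {0,1,2}. Then there is a constant C (depending only on σ and a) such that |∫₀^∞ e^{itξ} f(ξ) dξ| ≤ C·c·(1+t²)^{-(1+σ)/2} for all t ≥ 0. -/
/-!
For small `t` the trivial bound `∫₀^a c ξ^σ dξ` suffices. For `t > 0` split the integral at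
`ξ = 1/t`: the piece near `0` is again bounded trivially, by `c t^{-(1+σ)} / (1+σ)`, and on
`[1/t, a + 1/t]` two integrations by parts against `e^{itξ}` gain a factor `t⁻²` (the boundary
terms at the right end vanish, `f` being locally zero there), while
`∫_{1/t}^∞ ξ^{σ-2} dξ = t^{1-σ} / (1-σ)` because `σ < 1`. The two regimes are glued by
`1 + t² ≤ 2 max(1, t)²`.
-/

open Complex MeasureTheory Set intervalIntegral Real

lemma norm_cexp_I_mul_mul (t x : ℝ) : ‖cexp (I * t * x)‖ = 1 := by
  rw [mul_assoc, ← ofReal_mul, norm_exp_I_mul_ofReal]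

lemma norm_integral_zero_le_of_norm_le_rpow {F : ℝ → ℂ} {b c σ : ℝ} (hσ : -1 < σ) (hb : 0 ≤ b)
    (hF : ∀ ξ ∈ Ioc 0 b, ‖F ξ‖ ≤ c * ξ ^ σ) :
    ‖∫ ξ in 0..b, F ξ‖ ≤ c * b ^ (1 + σ) / (1 + σ) := by
  calc ‖∫ ξ in 0..b, F ξ‖ ≤ ∫ ξ in 0..b, c * ξ ^ σ :=
        norm_integral_le_of_norm_le hb (.of_forall hF) ((intervalIntegrable_rpow' hσ).const_mul c)
    _ = c * b ^ (1 + σ) / (1 + σ) := by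
        rw [intervalIntegral.integral_const_mul, integral_rpow (.inl hσ), zero_rpow (by linarith),
          add_comm σ 1]
        ring

lemma intervalIntegrable_zero_of_norm_le_rpow {F : ℝ → ℂ} {b c σ : ℝ} (hσ : -1 < σ) (hb : 0 ≤ b)
    (hFc : ContinuousOn F (Ioc 0 b)) (hF : ∀ ξ ∈ Ioc 0 b, ‖F ξ‖ ≤ c * ξ ^ σ) :
    IntervalIntegrable F volume 0 b := by
  refine ((intervalIntegrable_rpow' hσ).const_mul c).mono_fun' ?_ ?_
  · rw [uIoc_of_le hb]
    exact hFc.aestronglyMeasurable measurableSet_Ioc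
  · rw [uIoc_of_le hb]
    exact (ae_restrict_mem measurableSet_Ioc).mono hF

lemma setIntegral_Ioi_eq_integral_of_eq_zero {F : ℝ → ℂ} {b : ℝ} (hb : 0 ≤ b)
    (hF : ∀ ξ > b, F ξ = 0) :
    ∫ ξ in Ioi 0, F ξ = ∫ ξ in 0..b, F ξ := by
  rw [integral_of_le hb]
  refine setIntegral_eq_of_subset_of_forall_sdiff_eq_zero measurableSet_Ioi Ioc_subset_Ioi_self ?_
  rintro ξ ⟨hξ0, hξb⟩
  exact hF ξ (lt_of_not_ge fun h => hξb ⟨hξ0, h⟩)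

lemma integral_rpow_le_of_lt_neg_one {u v r : ℝ} (hr : r < -1) (hu : 0 < u) (huv : u ≤ v) :
    ∫ x in u..v, x ^ r ≤ u ^ (r + 1) / -(r + 1) := by
  rw [integral_rpow (.inr ⟨hr.ne, notMem_uIcc_of_lt hu (hu.trans_le huv)⟩), ← neg_div_neg_eq,
    neg_sub]
  gcongr
  · linarith
  · exact sub_le_self _ (rpow_nonneg (hu.le.trans huv) _)

lemma integral_cexp_mul_eq_twice_by_parts {g g' g'' : ℝ → ℂ} {L : ℂ} {u v : ℝ} (hL : L ≠ 0)
    (hg : ∀ x ∈ uIcc u v, HasDerivAt g (g' x) x) (hg' : ∀ x ∈ uIcc u v, HasDerivAt g' (g'' x) x)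
    (hi' : IntervalIntegrable g' volume u v) (hi'' : IntervalIntegrable g'' volume u v)
    (hgv : g v = 0) (hg'v : g' v = 0) :
    ∫ x in u..v, cexp (L * x) * g x =
      -(g u * cexp (L * u) / L) + g' u * cexp (L * u) / L ^ 2
        + (∫ x in u..v, g'' x * cexp (L * x)) / L ^ 2 := by
  have hE : ∀ (K : ℂ) (x : ℝ), HasDerivAt (fun y : ℝ => cexp (L * y) / (L * K))
      (cexp (L * x) / K) x := by
    intro K x
    have := (((hasDerivAt_id (x : ℂ)).const_mul L).cexp.comp_ofReal).div_const (L * K)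
    simpa only [id, mul_one, mul_comm L K, mul_div_mul_right _ _ hL] using this
  have hEi : ∀ K : ℂ, IntervalIntegrable (fun x : ℝ => cexp (L * x) / K) volume u v := fun K =>
    (by fun_prop : Continuous fun x : ℝ => cexp (L * x) / K).intervalIntegrable u v
  have ibp1 := integral_mul_deriv_eq_deriv_mul hg (fun x _ => hE 1 x) hi' (hEi 1)
  have ibp2 := integral_mul_deriv_eq_deriv_mul hg' (fun x _ => hE L x) hi'' (hEi L)
  simp only [mul_one, div_one, ← mul_div_assoc, intervalIntegral.integral_div] at ibp1 ibp2
  simp_rw [mul_comm (cexp _) (g _), ibp1, ibp2, hgv, hg'v]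
  field_simp
  ring

lemma norm_integral_cexp_mul_le {g g' g'' : ℝ → ℂ} {t u v c σ : ℝ} (ht : 0 < t) (hu : 0 < u)
    (huv : u ≤ v) (hσ : σ < 1)
    (hg : ∀ x ∈ uIcc u v, HasDerivAt g (g' x) x) (hg' : ∀ x ∈ uIcc u v, HasDerivAt g' (g'' x) x)
    (hi'' : IntervalIntegrable g'' volume u v) (hgv : g v = 0) (hg'v : g' v = 0)
    (hb : ‖g u‖ ≤ c * u ^ σ) (hb' : ‖g' u‖ ≤ c * u ^ (σ - 1))
    (hb'' : ∀ x ∈ Ioc u v, ‖g'' x‖ ≤ c * x ^ (σ - 2)) :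
    ‖∫ x in u..v, cexp (I * t * x) * g x‖ ≤
      c * (u ^ σ / t + (u ^ (σ - 1) + u ^ (σ - 1) / (1 - σ)) / t ^ 2) := by
  have hc : 0 ≤ c := nonneg_of_mul_nonneg_left ((norm_nonneg _).trans hb) (rpow_pos_of_pos hu σ)
  have hL : I * (t : ℂ) ≠ 0 := mul_ne_zero I_ne_zero (ofReal_ne_zero.2 ht.ne')
  have hnL : ‖I * (t : ℂ)‖ = t := by simp [abs_of_pos ht]
  have hi' : IntervalIntegrable g' volume u v :=
    (HasDerivAt.continuousOn hg').intervalIntegrable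
  have hrem : ‖∫ x in u..v, g'' x * cexp (I * t * x)‖ ≤ c * (u ^ (σ - 1) / (1 - σ)) := by
    calc ‖∫ x in u..v, g'' x * cexp (I * t * x)‖ ≤ ∫ x in u..v, c * x ^ (σ - 2) := by
          refine norm_integral_le_of_norm_le huv (.of_forall fun x hx => ?_) ?_
          · rw [norm_mul, norm_cexp_I_mul_mul, mul_one]; exact hb'' x hx
          · exact (intervalIntegrable_rpow
              (.inr (notMem_uIcc_of_lt hu (hu.trans_le huv)))).const_mul c
      _ ≤ c * (u ^ (σ - 1) / (1 - σ)) := by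
          rw [intervalIntegral.integral_const_mul]
          gcongr
          exact (integral_rpow_le_of_lt_neg_one (by linarith) hu huv).trans_eq
            (by rw [show σ - 2 + 1 = σ - 1 by ring, neg_sub])
  rw [integral_cexp_mul_eq_twice_by_parts hL hg hg' hi' hi'' hgv hg'v]
  calc _ ≤ ‖g u * cexp (I * t * u) / (I * t)‖ + ‖g' u * cexp (I * t * u) / (I * t) ^ 2‖
        + ‖(∫ x in u..v, g'' x * cexp (I * t * x)) / (I * t) ^ 2‖ := by
        rw [← norm_neg (g u * _ / _)]
        exact norm_add₃_le
    _ ≤ c * u ^ σ / t + c * u ^ (σ - 1) / t ^ 2 + c * (u ^ (σ - 1) / (1 - σ)) / t ^ 2 := by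
        simp only [norm_div, norm_mul, norm_pow, norm_cexp_I_mul_mul, hnL, mul_one]
        gcongr
    _ = _ := by ring

lemma le_mul_one_add_sq_rpow_neg {x A B s t : ℝ} (hs : 0 ≤ s) (ht : 0 ≤ t) (hA0 : 0 ≤ A)
    (hB0 : 0 ≤ B) (hA : x ≤ A) (hB : 0 < t → x ≤ B * t ^ (-s)) :
    x ≤ (A + B) * 2 ^ (s / 2) * (1 + t ^ 2) ^ (-s / 2) := by
  have hP : 0 < (1 + t ^ 2) ^ (s / 2) := by positivity
  rw [neg_div, rpow_neg (by positivity), mul_assoc, ← div_eq_mul_inv]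
  rcases le_or_gt t 1 with h1 | h1
  · have : 1 ≤ 2 ^ (s / 2) / (1 + t ^ 2) ^ (s / 2) := by
      rw [one_le_div hP]
      exact rpow_le_rpow (by positivity) (by nlinarith) (by positivity)
    nlinarith
  · have ht0 : 0 < t := by linarith
    have : t ^ (-s) ≤ 2 ^ (s / 2) / (1 + t ^ 2) ^ (s / 2) := by
      rw [rpow_neg ht, le_div_iff₀ hP, inv_mul_le_iff₀ (by positivity)]
      calc (1 + t ^ 2) ^ (s / 2) ≤ (2 * t ^ 2) ^ (s / 2) :=
            rpow_le_rpow (by positivity) (by nlinarith) (by positivity)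
        _ = t ^ s * 2 ^ (s / 2) := by
            rw [mul_rpow (by norm_num) (by positivity), ← rpow_natCast, ← rpow_mul ht, mul_comm]
            ring_nf
    nlinarith [hB ht0, rpow_nonneg ht (-s)]

section

variable {f : ℝ → ℂ} {a c σ : ℝ}

lemma norm_le_of_norm_iteratedDerivWithin_le
    (hb : ∀ ξ > (0 : ℝ), ∀ k ≤ 2, ‖iteratedDerivWithin k f (Ioi 0) ξ‖ ≤ c * ξ ^ (σ - k))
    {ξ : ℝ} (hξ : 0 < ξ) :
    ‖f ξ‖ ≤ c * ξ ^ σ ∧ ‖deriv f ξ‖ ≤ c * ξ ^ (σ - 1) ∧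
      ‖deriv (deriv f) ξ‖ ≤ c * ξ ^ (σ - 2) := by
  have h k (hk : k ≤ 2) :=
    iteratedDerivWithin_of_isOpen (n := k) (f := f) isOpen_Ioi hξ ▸ hb ξ hξ k hk
  refine ⟨?_, ?_, ?_⟩
  · simpa using h 0 (by norm_num)
  · simpa using h 1 (by norm_num)
  · simpa [iteratedDeriv_succ] using h 2 le_rfl

lemma norm_integral_Ioi_cexp_mul_le (hσ : -1 < σ) (ha : 0 ≤ a) (hfa : ∀ ξ, a ≤ ξ → f ξ = 0)
    (hb : ∀ ξ > (0 : ℝ), ‖f ξ‖ ≤ c * ξ ^ σ) (t : ℝ) :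
    ‖∫ ξ in Ioi (0 : ℝ), cexp (I * t * ξ) * f ξ‖ ≤ c * a ^ (1 + σ) / (1 + σ) := by
  rw [setIntegral_Ioi_eq_integral_of_eq_zero ha fun ξ hξ => by simp [hfa ξ hξ.le]]
  refine norm_integral_zero_le_of_norm_le_rpow hσ ha fun ξ hξ => ?_
  rw [norm_mul, norm_cexp_I_mul_mul, one_mul]
  exact hb ξ hξ.1

lemma norm_integral_Ioi_cexp_mul_le_rpow_neg (hσ₀ : -1 < σ) (hσ₁ : σ < 1) (ha : 0 ≤ a)
    (hf : ContDiffOn ℝ 2 f (Ioi 0)) (hfa : ∀ ξ, a ≤ ξ → f ξ = 0)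
    (hb : ∀ ξ > (0 : ℝ), ∀ k ≤ 2, ‖iteratedDerivWithin k f (Ioi 0) ξ‖ ≤ c * ξ ^ (σ - k))
    {t : ℝ} (ht : 0 < t) :
    ‖∫ ξ in Ioi (0 : ℝ), cexp (I * t * ξ) * f ξ‖ ≤
      c * (1 / (1 + σ) + 2 + 1 / (1 - σ)) * t ^ (-(1 + σ)) := by
  set u := t⁻¹
  set v := a + u
  have hu : 0 < u := inv_pos.2 ht
  have huv : u ≤ v := le_add_of_nonneg_left ha
  have hpos : ∀ x ∈ uIcc u v, x ∈ Ioi (0 : ℝ) := fun x hx =>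
    hu.trans_le (uIcc_of_le huv ▸ hx).1
  have hbd ξ (hξ : 0 < ξ) := norm_le_of_norm_iteratedDerivWithin_le hb hξ
  have hf' : ContDiffOn ℝ 1 (deriv f) (Ioi 0) := hf.deriv_of_isOpen isOpen_Ioi le_rfl
  have hderiv {g : ℝ → ℂ} {n : WithTop ℕ∞} (hg : ContDiffOn ℝ n g (Ioi 0)) (hn : n ≠ 0) :
      ∀ x ∈ uIcc u v, HasDerivAt g (deriv g x) x := fun x hx =>
    ((hg.contDiffAt (isOpen_Ioi.mem_nhds (hpos x hx))).differentiableAt hn).hasDerivAt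
  have hfv : ∀ ξ, a < ξ → f ξ = 0 := fun ξ hξ => hfa ξ hξ.le
  have hf'v : deriv f v = 0 := by
    have : f =ᶠ[nhds v] fun _ => 0 :=
      Filter.eventually_of_mem (isOpen_Ioi.mem_nhds (lt_add_of_pos_right a hu)) hfv
    simp [this.deriv_eq]
  have hFb : ∀ ξ ∈ Ioc 0 u, ‖cexp (I * t * ξ) * f ξ‖ ≤ c * ξ ^ σ := fun ξ hξ => by
    rw [norm_mul, norm_cexp_I_mul_mul, one_mul]; exact (hbd ξ hξ.1).1
  have hFc : ContinuousOn (fun ξ : ℝ => cexp (I * t * ξ) * f ξ) (Ioi 0) :=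
    (by fun_prop : Continuous fun ξ : ℝ => cexp (I * t * ξ)).continuousOn.mul hf.continuousOn
  have hsplit : ∫ ξ in Ioi (0 : ℝ), cexp (I * t * ξ) * f ξ =
      (∫ ξ in 0..u, cexp (I * t * ξ) * f ξ) + ∫ ξ in u..v, cexp (I * t * ξ) * f ξ := by
    rw [setIntegral_Ioi_eq_integral_of_eq_zero (hu.le.trans huv) fun ξ hξ => by
        simp [hfv ξ ((le_add_of_nonneg_right hu.le).trans_lt hξ)]]
    refine (integral_add_adjacent_intervals ?_ ?_).symm
    · exact intervalIntegrable_zero_of_norm_le_rpow hσ₀ hu.le (hFc.mono Ioc_subset_Ioi_self) hFb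
    · exact (hFc.mono hpos).intervalIntegrable
  have hF1 := norm_integral_cexp_mul_le ht hu huv hσ₁ (hderiv hf two_ne_zero)
    (hderiv hf' one_ne_zero)
    ((hf'.continuousOn_deriv_of_isOpen isOpen_Ioi le_rfl).mono hpos).intervalIntegrable
    (hfv v (lt_add_of_pos_right a hu)) hf'v (hbd u hu).1 (hbd u hu).2.1
    fun x hx => (hbd x (hu.trans hx.1)).2.2
  have hF0 := norm_integral_zero_le_of_norm_le_rpow hσ₀ hu.le hFb
  have hpow₀ : u ^ σ / t = u ^ (1 + σ) := by
    rw [div_eq_mul_inv, add_comm, rpow_add_one hu.ne']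
  have hpow₁ : u ^ (σ - 1) / t ^ 2 = u ^ (1 + σ) := by
    rw [div_eq_mul_inv, ← inv_pow, show 1 + σ = σ - 1 + 1 + 1 by ring, rpow_add_one hu.ne',
      rpow_add_one hu.ne', pow_two, mul_assoc]
  have hpow₂ : t ^ (-(1 + σ)) = u ^ (1 + σ) := by
    rw [rpow_neg ht.le, inv_rpow ht.le]
  rw [hsplit, hpow₂]
  calc _ ≤ _ := norm_add_le _ _
    _ ≤ _ := add_le_add hF0 hF1
    _ = _ := by rw [add_div, div_right_comm, hpow₀, hpow₁]; ring

end

/-- Oscillatory integral estimate (Lemma `osc`): if `f ∈ C²((0,∞))` vanishes for `ξ ≥ a`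
and `|f^{(k)}(ξ)| ≤ c ξ^{σ-k}` for `k = 0,1,2` with `σ ∈ (-1,1)`, then
`|∫₀^∞ e^{itξ} f(ξ) dξ| ≤ C c ⟨t⟩^{-1-σ}` for all `t ≥ 0`. -/
theorem stmt0 (σ a : ℝ) (hσ : σ ∈ Set.Ioo (-1 : ℝ) 1) (ha : 0 < a) :
    ∃ C > 0, ∀ (f : ℝ → ℂ) (c : ℝ), 0 < c →
      ContDiffOn ℝ 2 f (Set.Ioi 0) →
      (∀ ξ : ℝ, a ≤ ξ → f ξ = 0) →
      (∀ ξ > (0 : ℝ), ∀ k ≤ 2, ‖iteratedDerivWithin k f (Set.Ioi 0) ξ‖ ≤ c * ξ ^ (σ - k)) →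
      ∀ t ≥ (0 : ℝ),
        ‖∫ ξ in Set.Ioi (0 : ℝ), Complex.exp (Complex.I * t * ξ) * f ξ‖ ≤
          C * c * (1 + t ^ 2) ^ (-(1 + σ) / 2) := by
  obtain ⟨hσ₀, hσ₁⟩ := hσ
  have h₀ : 0 < 1 + σ := by linarith
  have h₁ : 0 < 1 - σ := by linarith
  set K := a ^ (1 + σ) / (1 + σ)
  set M := 1 / (1 + σ) + 2 + 1 / (1 - σ)
  have hK : 0 < K := div_pos (rpow_pos_of_pos ha _) h₀
  have hM : 0 < M := by positivity
  refine ⟨(K + M) * 2 ^ ((1 + σ) / 2), by positivity, fun f c hc hf hfa hb t ht => ?_⟩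
  have hsmall := norm_integral_Ioi_cexp_mul_le hσ₀ ha.le hfa
    (fun ξ hξ => (norm_le_of_norm_iteratedDerivWithin_le hb hξ).1) t
  have hlarge := fun ht' : 0 < t =>
    norm_integral_Ioi_cexp_mul_le_rpow_neg hσ₀ hσ₁ ha.le hf hfa hb ht'
  rw [mul_div_assoc] at hsmall
  convert le_mul_one_add_sq_rpow_neg h₀.le ht (by positivity) (by positivity) hsmall hlarge
    using 1
  ring
end

section
/- Let a ∈ C¹(ℝ³) satisfy |a(ξ,x,η)| ≤ C⟨x⟩^{-1} and |∂_η a(ξ,x,η)| ≤ C⟨x⟩^{-1} for all ξ,x,η ∈ ℝ, and let χ be a smooth cut-off equal to 1 on [−1/2,1/2] and 0 outside [−1,1]. For ε > 0 and f ∈ C_c^∞(ℝ) define S_ε^± f(ξ) := ∫_ℝ e^{ixξ} ∫_ℝ e^{±ixη} χ((ξ−η)²/ε²) a(ξ,x,η) f(η) dη dx. Then for every ξ ∈ ℝ, |S_ε^± f(ξ)| ≤ C' ε^{1/2}, and in particular lim_{ε→0+} S_ε^± f(ξ) = 0. -/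
open Filter MeasureTheory Set

lemma normExpI (r : ℝ) : ‖Complex.exp (Complex.I * r)‖ = 1 := by
  rw [mul_comm, Complex.norm_exp_ofReal_mul_I]

lemma normE {h : ℝ → ℂ} (hm : AEStronglyMeasurable h volume) {a b B : ℝ}
    (h0 : ∀ y, y ∉ Set.Icc a b → h y = 0) (hB : ∀ y ∈ Set.Icc a b, ‖h y‖ ≤ B) :
    ‖∫ y, h y‖ ≤ B * ((b - a) ⊔ 0) := by
  rw [← MeasureTheory.setIntegral_eq_integral_of_forall_compl_eq_zero h0]
  have hvol : volume (Set.Icc a b) < ⊤ := measure_Icc_lt_top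
  have h2 := norm_setIntegral_le_of_norm_le_const (μ := volume) (s := Set.Icc a b) hvol hB
  rw [measureReal_def, Real.volume_Icc] at h2
  rcases le_total (b - a) 0 with h | h
  · rw [ENNReal.ofReal_eq_zero.2 h] at h2
    simpa [sup_eq_right.2 h] using h2
  · rw [ENNReal.toReal_ofReal h] at h2
    simpa [sup_eq_left.2 h] using h2

set_option maxHeartbeats 1000000 in
/-- Lemma `conv0`: for a `C¹` amplitude `a` with `|a|, |∂_η a| ≲ ⟨x⟩⁻¹`, the regularized
oscillatory integrals `S_ε^± f(ξ)` satisfy `|S_ε^± f(ξ)| ≤ C' ε^{1/2}` and in particular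
tend to `0` as `ε → 0⁺`. -/
theorem stmt7 (C : ℝ) (hC : 0 ≤ C) (a : ℝ → ℝ → ℝ → ℂ)
    (ha : ContDiff ℝ 1 (fun p : ℝ × ℝ × ℝ => a p.1 p.2.1 p.2.2))
    (hab : ∀ ξ x η : ℝ, ‖a ξ x η‖ ≤ C / Real.sqrt (1 + x^2))
    (hab' : ∀ ξ x η : ℝ, ‖deriv (fun η' => a ξ x η') η‖ ≤ C / Real.sqrt (1 + x^2))
    (χ : ℝ → ℝ) (hχ : ContDiff ℝ (⊤ : ℕ∞) χ)
    (hχ1 : ∀ x ∈ Set.Icc (-(1/2) : ℝ) (1/2), χ x = 1)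
    (hχ0 : ∀ x : ℝ, 1 ≤ |x| → χ x = 0)
    (f : ℝ → ℂ) (hf : ContDiff ℝ (⊤ : ℕ∞) f) (hfs : HasCompactSupport f) :
    (∃ C' > 0, ∀ s : ℝ, s = 1 ∨ s = -1 → ∀ ε > (0:ℝ), ∀ ξ : ℝ,
      ‖∫ x : ℝ, Complex.exp (Complex.I * x * ξ) *
          ∫ η : ℝ, Complex.exp (Complex.I * s * x * η) * (χ ((ξ - η)^2 / ε^2) : ℂ) *
            a ξ x η * f η‖ ≤ C' * Real.sqrt ε) ∧
    (∀ s : ℝ, s = 1 ∨ s = -1 → ∀ ξ : ℝ,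
      Tendsto (fun ε : ℝ =>
        ∫ x : ℝ, Complex.exp (Complex.I * x * ξ) *
          ∫ η : ℝ, Complex.exp (Complex.I * s * x * η) * (χ ((ξ - η)^2 / ε^2) : ℂ) *
            a ξ x η * f η)
        (nhdsWithin 0 (Set.Ioi 0)) (nhds 0)) := by
  -- support of f
  obtain ⟨r, hr⟩ := hfs.isBounded.subset_closedBall 0
  set L : ℝ := max r 1 with hLdef
  have hL : 0 < L := lt_of_lt_of_le one_pos (le_max_right _ _)
  have hfsupp : ∀ y : ℝ, y ∉ Set.Icc (-L) L → f y = 0 := by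
    intro y hy
    apply image_eq_zero_of_notMem_tsupport
    intro hmem
    apply hy
    have := hr hmem
    rw [Real.closedBall_eq_Icc] at this
    simp only [zero_sub, zero_add] at this
    have hrL : r ≤ L := le_max_left r 1
    exact ⟨by linarith [this.1], by linarith [this.2]⟩
  -- bounds
  have hχsupp : HasCompactSupport χ := by
    apply HasCompactSupport.intro (isCompact_Icc (a := (-1:ℝ)) (b := 1))
    intro y hy
    apply hχ0
    rw [Set.mem_Icc, not_and_or] at hy
    rcases hy with hy | hy <;> [skip; skip] <;> push_neg at hy <;> rw [le_abs] <;>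
      [right; left] <;> linarith
  obtain ⟨M0, hM0⟩ := hχsupp.exists_bound_of_continuous hχ.continuous
  obtain ⟨M0', hM0'⟩ := hχsupp.deriv.exists_bound_of_continuous (hχ.continuous_deriv (by simp))
  obtain ⟨Mf0, hMf0⟩ := hfs.exists_bound_of_continuous hf.continuous
  obtain ⟨Mf0', hMf0'⟩ := hfs.deriv.exists_bound_of_continuous (hf.continuous_deriv (by simp))
  set M : ℝ := max M0 0 with hMdef
  set M' : ℝ := max M0' 0 with hM'def
  set Mf : ℝ := max Mf0 0 with hMfdef
  set Mf' : ℝ := max Mf0' 0 with hMf'def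
  have hM : ∀ t, |χ t| ≤ M := fun t => le_trans (by rw [← Real.norm_eq_abs]; exact hM0 t) (le_max_left _ _)
  have hM' : ∀ t, |deriv χ t| ≤ M' := fun t => le_trans (by rw [← Real.norm_eq_abs]; exact hM0' t) (le_max_left _ _)
  have hMf : ∀ t, ‖f t‖ ≤ Mf := fun t => le_trans (hMf0 t) (le_max_left _ _)
  have hMf' : ∀ t, ‖deriv f t‖ ≤ Mf' := fun t => le_trans (hMf0' t) (le_max_left _ _)
  have hMn : 0 ≤ M := le_max_right _ _
  have hM'n : 0 ≤ M' := le_max_right _ _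
  have hMfn : 0 ≤ Mf := le_max_right _ _
  have hMf'n : 0 ≤ Mf' := le_max_right _ _
  -- constants
  set K₁ : ℝ := 2 * M * C * Mf with hK₁def
  set K₂ : ℝ := C * (4 * M' * Mf + 2 * L * M * Mf + 2 * L * M * Mf') with hK₂def
  set K : ℝ := max K₁ K₂ + 1 with hKdef
  have hK₁n : 0 ≤ K₁ := by positivity
  have hK : 0 < K := by
    have := le_max_left K₁ K₂; simp only [hKdef]; nlinarith
  set C' : ℝ := 2 * Real.pi * K with hC'def
  have hC' : 0 < C' := by positivity
  have main : ∀ s : ℝ, s = 1 ∨ s = -1 → ∀ ε > (0:ℝ), ∀ ξ : ℝ,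
      ‖∫ x : ℝ, Complex.exp (Complex.I * x * ξ) *
          ∫ η : ℝ, Complex.exp (Complex.I * s * x * η) * (χ ((ξ - η)^2 / ε^2) : ℂ) *
            a ξ x η * f η‖ ≤ C' * Real.sqrt ε := by
    intro s hs ε hε ξ
    have hsabs : |s| = 1 := by rcases hs with h | h <;> simp [h]
    set g : ℝ → ℂ := fun x => ∫ η : ℝ,
      Complex.exp (Complex.I * s * x * η) * (χ ((ξ - η)^2 / ε^2) : ℂ) * a ξ x η * f η
      with hgdef
    set a₀ : ℝ := max (ξ - ε) (-L) with ha₀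
    set b₀ : ℝ := min (ξ + ε) L with hb₀
    have ha₀1 : ξ - ε ≤ a₀ := le_max_left _ _
    have ha₀2 : -L ≤ a₀ := le_max_right _ _
    have hb₀1 : b₀ ≤ ξ + ε := min_le_left _ _
    have hb₀2 : b₀ ≤ L := min_le_right _ _
    have hlen1 : (b₀ - a₀) ⊔ 0 ≤ 2 * ε := sup_le (by linarith) (by positivity)
    have hlen2 : (b₀ - a₀) ⊔ 0 ≤ 2 * L := sup_le (by linarith) (by positivity)
    have hIccmem : ∀ y ∈ Set.Icc a₀ b₀, |ξ - y| ≤ ε := by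
      intro y hy
      rw [abs_le]
      exact ⟨by linarith [hy.2], by linarith [hy.1]⟩
    have hzero : ∀ x y : ℝ, y ∉ Set.Icc a₀ b₀ →
        (χ ((ξ - y)^2 / ε^2) : ℂ) * a ξ x y * f y = 0 := by
      intro x y hy
      by_cases h1 : 1 ≤ |(ξ - y)^2 / ε^2|
      · rw [hχ0 _ h1]; simp
      by_cases h2 : f y = 0
      · rw [h2]; simp
      exfalso
      apply hy
      have hyL : y ∈ Set.Icc (-L) L := by
        by_contra h; exact h2 (hfsupp y h)
      push_neg at h1
      rw [abs_of_nonneg (by positivity)] at h1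
      have hsq : (ξ - y)^2 < ε^2 := by
        rwa [div_lt_one (by positivity)] at h1
      constructor
      · apply max_le _ hyL.1; nlinarith
      · apply le_min _ hyL.2; nlinarith
    have hinnercont : ∀ x : ℝ, Continuous fun η : ℝ =>
        Complex.exp (Complex.I * s * x * η) * (χ ((ξ - η)^2 / ε^2) : ℂ) * a ξ x η * f η := by
      intro x
      have h1 : Continuous fun η : ℝ => a ξ x η :=
        ha.continuous.comp (continuous_const.prodMk (continuous_const.prodMk continuous_id))
      have h2 : Continuous fun η : ℝ => χ ((ξ - η)^2 / ε^2) :=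
        hχ.continuous.comp (by fun_prop)
      exact (((Complex.continuous_exp.comp (by fun_prop)).mul
        (Complex.continuous_ofReal.comp h2)).mul h1).mul hf.continuous
    have hsqrt1 : ∀ x : ℝ, 1 ≤ Real.sqrt (1 + x^2) := by
      intro x
      have := Real.sqrt_le_sqrt (show (1:ℝ) ≤ 1 + x^2 by nlinarith)
      rwa [Real.sqrt_one] at this
    have hDx0 : ∀ x : ℝ, 0 ≤ C / Real.sqrt (1 + x^2) := fun x =>
      div_nonneg hC (Real.sqrt_nonneg _)
    have hDxC : ∀ x : ℝ, C / Real.sqrt (1 + x^2) ≤ C := fun x =>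
      div_le_self hC (hsqrt1 x)
    -- trivial bound
    have hgA : ∀ x : ℝ, ‖g x‖ ≤ K₁ * ε := by
      intro x
      have hb := normE (h := fun η : ℝ =>
          Complex.exp (Complex.I * s * x * η) * (χ ((ξ - η)^2 / ε^2) : ℂ) * a ξ x η * f η)
        (a := a₀) (b := b₀) (B := M * (C / Real.sqrt (1 + x^2)) * Mf)
        (hinnercont x).aestronglyMeasurable
        (by
          intro y hy
          beta_reduce
          rw [show Complex.exp (Complex.I * s * x * y) * (χ ((ξ - y)^2 / ε^2) : ℂ) * a ξ x y * f y
            = Complex.exp (Complex.I * s * x * y) * ((χ ((ξ - y)^2 / ε^2) : ℂ) * a ξ x y * f y)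
            from by ring, hzero x y hy, mul_zero])
        (by
          intro y hy
          beta_reduce
          have e1 : ‖Complex.exp (Complex.I * s * x * y)‖ = 1 := by
            rw [show Complex.I * (s:ℂ) * (x:ℂ) * (y:ℂ) = Complex.I * ((s * x * y : ℝ) : ℂ)
              from by push_cast; ring]
            exact normExpI _
          calc ‖Complex.exp (Complex.I * s * x * y) * (χ ((ξ - y)^2 / ε^2) : ℂ) * a ξ x y * f y‖
              = |χ ((ξ - y)^2 / ε^2)| * ‖a ξ x y‖ * ‖f y‖ := by
                rw [norm_mul, norm_mul, norm_mul, e1, one_mul, Complex.norm_real,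
                  Real.norm_eq_abs]
            _ ≤ M * (C / Real.sqrt (1 + x^2)) * Mf := by
                apply mul_le_mul (mul_le_mul (hM _) (hab ξ x y) (norm_nonneg _) hMn)
                  (hMf y) (norm_nonneg _) (mul_nonneg hMn (hDx0 x)))
      calc ‖g x‖ ≤ M * (C / Real.sqrt (1 + x^2)) * Mf * ((b₀ - a₀) ⊔ 0) := hb
        _ ≤ M * (C / Real.sqrt (1 + x^2)) * Mf * (2 * ε) := by
            apply mul_le_mul_of_nonneg_left hlen1
            exact mul_nonneg (mul_nonneg hMn (hDx0 x)) hMfn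
        _ ≤ M * C * Mf * (2 * ε) := by
            apply mul_le_mul_of_nonneg_right _ (by positivity)
            apply mul_le_mul_of_nonneg_right _ hMfn
            exact mul_le_mul_of_nonneg_left (hDxC x) hMn
        _ = K₁ * ε := by rw [hK₁def]; ring
    -- IBP bound
    have hK₂n : 0 ≤ K₂ := by
      rw [hK₂def]
      apply mul_nonneg hC
      have h1 : 0 ≤ M' * Mf := mul_nonneg hM'n hMfn
      have h2 : 0 ≤ L * M * Mf := mul_nonneg (mul_nonneg hL.le hMn) hMfn
      have h3 : 0 ≤ L * M * Mf' := mul_nonneg (mul_nonneg hL.le hMn) hMf'n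
      nlinarith
    have hgB : ∀ x : ℝ, x ≠ 0 → ‖g x‖ ≤ K₂ / x^2 := by
      intro x hx
      have hDx0x : 0 ≤ C / Real.sqrt (1 + x^2) := hDx0 x
      set φ : ℝ → ℂ := fun η => (χ ((ξ - η)^2 / ε^2) : ℂ) * a ξ x η * f η with hφdef
      have hφsupp0 : ∀ y, y ∉ Set.Icc a₀ b₀ → φ y = 0 := fun y hy => hzero x y hy
      have hφcs : HasCompactSupport φ := HasCompactSupport.intro isCompact_Icc hφsupp0
      have haA : ContDiff ℝ 1 (fun η => a ξ x η) :=
        ha.comp (contDiff_const.prodMk (contDiff_const.prodMk contDiff_id))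
      have hu : ContDiff ℝ 1 (fun η : ℝ => (ξ - η)^2 / ε^2) :=
        ((contDiff_const.sub contDiff_id).pow 2).div_const _
      have hχu : ContDiff ℝ 1 (fun η : ℝ => ((χ ((ξ - η)^2 / ε^2) : ℝ) : ℂ)) :=
        Complex.ofRealCLM.contDiff.comp ((hχ.of_le (by simp)).comp hu)
      have hφ1 : ContDiff ℝ 1 φ := (hχu.mul haA).mul (hf.of_le (by simp))
      have hφint : Integrable φ := hφ1.continuous.integrable_of_hasCompactSupport hφcs
      have hφ'int : Integrable (deriv φ) :=
        (hφ1.continuous_deriv le_rfl).integrable_of_hasCompactSupport hφcs.deriv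
      set w : ℝ := -(s * x) / (2 * Real.pi) with hwdef
      have hgw : g x = FourierTransform.fourier φ w := by
        rw [Real.fourier_real_eq_integral_exp_smul]
        simp only [hgdef]
        apply integral_congr_ae
        apply ae_of_all
        intro v
        beta_reduce
        rw [smul_eq_mul]
        have harg : ((-2 * Real.pi * v * w : ℝ) : ℂ) * Complex.I
            = Complex.I * s * x * v := by
          have h2 : (-2 * Real.pi * v * w : ℝ) = s * x * v := by
            rw [hwdef]; field_simp
          rw [h2]; push_cast; ring
        rw [harg, hφdef]
        ring
      have hFd := Real.fourier_deriv hφint (hφ1.differentiable one_ne_zero) hφ'int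
      have hnw : ‖(2 * (Real.pi:ℂ) * Complex.I * (w:ℂ))‖ = |x| := by
        rw [show (2 * (Real.pi:ℂ) * Complex.I * (w:ℂ)) = ((2 * Real.pi * w : ℝ) : ℂ) * Complex.I
          from by push_cast; ring, norm_mul, Complex.norm_I, mul_one, Complex.norm_real,
          Real.norm_eq_abs]
        have h2 : 2 * Real.pi * w = -(s * x) := by
          rw [hwdef]; field_simp
        rw [h2, abs_neg, abs_mul, hsabs, one_mul]
      have hkey : |x| * ‖g x‖ = ‖FourierTransform.fourier (deriv φ) w‖ := by
        rw [hgw, congrFun hFd w, norm_smul, hnw]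
      -- bound the Fourier integral of the derivative
      have hderiv0 : ∀ y, y ∉ Set.Icc a₀ b₀ → deriv φ y = 0 := by
        intro y hy
        have hts : tsupport φ ⊆ Set.Icc a₀ b₀ :=
          closure_minimal (fun z hz => by
            by_contra h; exact hz (hφsupp0 z h)) isClosed_Icc
        by_contra h
        exact hy (hts (support_deriv_subset (show y ∈ Function.support (deriv φ) from h)))
      have hderivb : ∀ v ∈ Set.Icc a₀ b₀, ‖deriv φ v‖ ≤
          M' * (2/ε) * (C / Real.sqrt (1 + x^2)) * Mf
          + M * (C / Real.sqrt (1 + x^2)) * Mf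
          + M * (C / Real.sqrt (1 + x^2)) * Mf' := by
        intro v hv
        have hdc : HasDerivAt (fun η : ℝ => (ξ - η)^2 / ε^2) (2 * (ξ - v) * (-1) / ε^2) v := by
          have := (((hasDerivAt_id v).const_sub ξ).pow 2).div_const (ε^2)
          exact this.congr_deriv (by simp)
        have hdχ : HasDerivAt (fun η : ℝ => χ ((ξ - η)^2 / ε^2))
            (deriv χ ((ξ - v)^2 / ε^2) * (2 * (ξ - v) * (-1) / ε^2)) v :=
          (((hχ.differentiable (by simp)) _).hasDerivAt).comp v hdc
        have hdχC := hdχ.ofReal_comp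
        have hda : HasDerivAt (fun η => a ξ x η) (deriv (fun η' => a ξ x η') v) v :=
          (haA.differentiable one_ne_zero v).hasDerivAt
        have hdf : HasDerivAt f (deriv f v) v := (hf.differentiable (by simp) v).hasDerivAt
        have hdφ : HasDerivAt φ
            ((((deriv χ ((ξ - v)^2 / ε^2) * (2 * (ξ - v) * (-1) / ε^2) : ℝ) : ℂ) * a ξ x v
              + (χ ((ξ - v)^2 / ε^2) : ℂ) * deriv (fun η' => a ξ x η') v) * f v
              + ((χ ((ξ - v)^2 / ε^2) : ℂ) * a ξ x v) * deriv f v) v := (hdχC.mul hda).mul hdf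
        rw [hdφ.deriv]
        have habs2 : |2 * (ξ - v) * (-1) / ε^2| ≤ 2 / ε := by
          have h1 : |ξ - v| ≤ ε := hIccmem v hv
          have h2 : |2 * (ξ - v) * (-1)| = 2 * |ξ - v| := by
            rw [abs_mul, abs_mul]; norm_num
          rw [abs_div, abs_of_pos (by positivity : (0:ℝ) < ε^2), h2,
            div_le_div_iff₀ (by positivity) hε]
          nlinarith [abs_nonneg (ξ - v)]
        have h₁ : ‖((deriv χ ((ξ - v)^2 / ε^2) * (2 * (ξ - v) * (-1) / ε^2) : ℝ) : ℂ)‖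
            ≤ M' * (2/ε) := by
          rw [Complex.norm_real, Real.norm_eq_abs, abs_mul]
          exact mul_le_mul (hM' _) habs2 (abs_nonneg _) hM'n
        have h₂ : ‖((χ ((ξ - v)^2 / ε^2) : ℝ) : ℂ)‖ ≤ M := by
          rw [Complex.norm_real, Real.norm_eq_abs]; exact hM _
        have h₃ : ‖a ξ x v‖ ≤ C / Real.sqrt (1 + x^2) := hab ξ x v
        have h₄ : ‖deriv (fun η' => a ξ x η') v‖ ≤ C / Real.sqrt (1 + x^2) := hab' ξ x v
        have hMε : 0 ≤ M' * (2/ε) := mul_nonneg hM'n (by positivity)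
        calc ‖(((deriv χ ((ξ - v)^2 / ε^2) * (2 * (ξ - v) * (-1) / ε^2) : ℝ) : ℂ) * a ξ x v
              + (χ ((ξ - v)^2 / ε^2) : ℂ) * deriv (fun η' => a ξ x η') v) * f v
            + ((χ ((ξ - v)^2 / ε^2) : ℂ) * a ξ x v) * deriv f v‖
            ≤ ‖(((deriv χ ((ξ - v)^2 / ε^2) * (2 * (ξ - v) * (-1) / ε^2) : ℝ) : ℂ) * a ξ x v
              + (χ ((ξ - v)^2 / ε^2) : ℂ) * deriv (fun η' => a ξ x η') v) * f v‖
            + ‖((χ ((ξ - v)^2 / ε^2) : ℂ) * a ξ x v) * deriv f v‖ := norm_add_le _ _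
          _ ≤ (M' * (2/ε) * (C / Real.sqrt (1 + x^2)) + M * (C / Real.sqrt (1 + x^2))) * Mf
              + M * (C / Real.sqrt (1 + x^2)) * Mf' := by
            apply add_le_add
            · rw [norm_mul]
              apply mul_le_mul _ (hMf v) (norm_nonneg _)
                (add_nonneg (mul_nonneg hMε hDx0x) (mul_nonneg hMn hDx0x))
              calc ‖((deriv χ ((ξ - v)^2 / ε^2) * (2 * (ξ - v) * (-1) / ε^2) : ℝ) : ℂ) * a ξ x v
                  + (χ ((ξ - v)^2 / ε^2) : ℂ) * deriv (fun η' => a ξ x η') v‖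
                  ≤ ‖((deriv χ ((ξ - v)^2 / ε^2) * (2 * (ξ - v) * (-1) / ε^2) : ℝ) : ℂ) * a ξ x v‖
                  + ‖(χ ((ξ - v)^2 / ε^2) : ℂ) * deriv (fun η' => a ξ x η') v‖ := norm_add_le _ _
                _ ≤ M' * (2/ε) * (C / Real.sqrt (1 + x^2)) + M * (C / Real.sqrt (1 + x^2)) := by
                  apply add_le_add
                  · rw [norm_mul]
                    exact mul_le_mul h₁ h₃ (norm_nonneg _) hMε
                  · rw [norm_mul]
                    exact mul_le_mul h₂ h₄ (norm_nonneg _) hMn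
            · rw [norm_mul, norm_mul]
              exact mul_le_mul (mul_le_mul h₂ h₃ (norm_nonneg _) hMn) (hMf' v) (norm_nonneg _)
                (mul_nonneg hMn hDx0x)
          _ = M' * (2/ε) * (C / Real.sqrt (1 + x^2)) * Mf
              + M * (C / Real.sqrt (1 + x^2)) * Mf
              + M * (C / Real.sqrt (1 + x^2)) * Mf' := by ring
      have hFbound : ‖FourierTransform.fourier (deriv φ) w‖
          ≤ (C / Real.sqrt (1 + x^2)) * (4 * M' * Mf + 2 * L * M * Mf + 2 * L * M * Mf') := by
        rw [Real.fourier_real_eq]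
        have hmeas : AEStronglyMeasurable
            (fun v : ℝ => (Real.fourierChar (-(v * w)) : Circle) • deriv φ v) volume := by
          apply Continuous.aestronglyMeasurable
          exact (Real.continuous_fourierChar.comp (by fun_prop)).smul
            (hφ1.continuous_deriv le_rfl)
        have hb := normE (a := a₀) (b := b₀) hmeas
          (fun y hy => by beta_reduce; rw [hderiv0 y hy, smul_zero])
          (fun y hy => by
            beta_reduce
            rw [Circle.norm_smul]
            exact hderivb y hy)
        refine hb.trans ?_
        have hl0 : (0:ℝ) ≤ (b₀ - a₀) ⊔ 0 := le_sup_right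
        set l := (b₀ - a₀) ⊔ 0
        have hS₁ : 0 ≤ M' * (2/ε) * (C / Real.sqrt (1 + x^2)) * Mf :=
          mul_nonneg (mul_nonneg (mul_nonneg hM'n (by positivity)) hDx0x) hMfn
        have hS₂ : 0 ≤ M * (C / Real.sqrt (1 + x^2)) * Mf :=
          mul_nonneg (mul_nonneg hMn hDx0x) hMfn
        have hS₃ : 0 ≤ M * (C / Real.sqrt (1 + x^2)) * Mf' :=
          mul_nonneg (mul_nonneg hMn hDx0x) hMf'n
        have e₁ : M' * (2/ε) * (C / Real.sqrt (1 + x^2)) * Mf * (2 * ε)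
            = (C / Real.sqrt (1 + x^2)) * (4 * M' * Mf) := by
          field_simp; ring
        nlinarith [mul_le_mul_of_nonneg_left hlen1 hS₁, mul_le_mul_of_nonneg_left hlen2 hS₂,
          mul_le_mul_of_nonneg_left hlen2 hS₃, e₁]
      -- conclude
      have hx2 : (0:ℝ) < x^2 := by positivity
      have hsx : |x| ≤ Real.sqrt (1 + x^2) := by
        rw [← Real.sqrt_sq_eq_abs]
        exact Real.sqrt_le_sqrt (by nlinarith)
      have hs0 : (0:ℝ) < Real.sqrt (1 + x^2) := by positivity
      have hkey2 : |x| * ‖g x‖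
          ≤ (C / Real.sqrt (1 + x^2)) * (4 * M' * Mf + 2 * L * M * Mf + 2 * L * M * Mf') := by
        rw [hkey]; exact hFbound
      have e1 : (C / Real.sqrt (1 + x^2)) * (4 * M' * Mf + 2 * L * M * Mf + 2 * L * M * Mf')
          * Real.sqrt (1 + x^2) = K₂ := by
        rw [hK₂def]; field_simp
      have t2 : |x| * ‖g x‖ * Real.sqrt (1 + x^2) ≤ K₂ := by
        have := mul_le_mul_of_nonneg_right hkey2 hs0.le
        rwa [e1] at this
      rw [le_div_iff₀ hx2]
      calc ‖g x‖ * x^2 = ‖g x‖ * |x| * |x| := by rw [← sq_abs x]; ring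
        _ ≤ ‖g x‖ * |x| * Real.sqrt (1 + x^2) :=
            mul_le_mul_of_nonneg_left hsx (mul_nonneg (norm_nonneg _) (abs_nonneg _))
        _ = |x| * ‖g x‖ * Real.sqrt (1 + x^2) := by ring
        _ ≤ K₂ := t2
    -- combined pointwise bound
    have hK₁K : K₁ ≤ K := by rw [hKdef]; linarith [le_max_left K₁ K₂]
    have hK₂K : K₂ ≤ K := by rw [hKdef]; linarith [le_max_right K₁ K₂]
    have hgD : ∀ x : ℝ, ‖g x‖ ≤ 2 * K * (ε⁻¹ + x^2)⁻¹ := by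
      intro x
      have hεinv : (0:ℝ) < ε⁻¹ := by positivity
      have hpos : (0:ℝ) < ε⁻¹ + x^2 := by positivity
      rw [← div_eq_mul_inv, le_div_iff₀ hpos]
      rcases le_or_gt (x^2) ε⁻¹ with h | h
      · have h1 := hgA x
        have t := mul_le_mul_of_nonneg_left h (mul_nonneg hK₁n hε.le)
        have t2 : K₁ * ε * ε⁻¹ = K₁ := by field_simp
        have u1 : ‖g x‖ * (ε⁻¹ + x^2) ≤ K₁ * ε * (ε⁻¹ + x^2) :=
          mul_le_mul_of_nonneg_right h1 hpos.le
        nlinarith [u1, t, t2]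
      · have hx : x ≠ 0 := by
          intro h0
          rw [h0] at h
          norm_num at h
          linarith
        have hx2 : (0:ℝ) < x^2 := by positivity
        have h1 := hgB x hx
        rw [le_div_iff₀ hx2] at h1
        nlinarith [h1, mul_le_mul_of_nonneg_left h.le (norm_nonneg (g x))]
    -- continuity of g
    have hgcont : Continuous g := by
      rw [hgdef]
      apply continuous_of_dominated (bound := (Set.Icc (-L) L).indicator fun _ => M * C * Mf)
      · intro x
        exact (hinnercont x).aestronglyMeasurable
      · intro x
        apply ae_of_all
        intro η
        by_cases hmem : η ∈ Set.Icc (-L) L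
        · rw [Set.indicator_of_mem hmem]
          have e1 : ‖Complex.exp (Complex.I * s * x * η)‖ = 1 := by
            rw [show Complex.I * (s:ℂ) * (x:ℂ) * (η:ℂ) = Complex.I * ((s * x * η : ℝ) : ℂ)
              from by push_cast; ring]
            exact normExpI _
          calc ‖Complex.exp (Complex.I * s * x * η) * (χ ((ξ - η)^2 / ε^2) : ℂ)
                * a ξ x η * f η‖
              = |χ ((ξ - η)^2 / ε^2)| * ‖a ξ x η‖ * ‖f η‖ := by
                rw [norm_mul, norm_mul, norm_mul, e1, one_mul, Complex.norm_real,
                  Real.norm_eq_abs]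
            _ ≤ M * C * Mf := by
                apply mul_le_mul (mul_le_mul (hM _) ((hab ξ x η).trans (hDxC x))
                  (norm_nonneg _) hMn) (hMf η) (norm_nonneg _) (mul_nonneg hMn hC)
        · rw [Set.indicator_of_notMem hmem, hfsupp η hmem]
          simp
      · exact (integrableOn_const measure_Icc_lt_top.ne).integrable_indicator
          measurableSet_Icc
      · apply ae_of_all
        intro η
        have h1 : Continuous fun x : ℝ => a ξ x η :=
          ha.continuous.comp (continuous_const.prodMk (continuous_id.prodMk continuous_const))
        exact (((Complex.continuous_exp.comp (by fun_prop)).mul continuous_const).mul h1).mul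
          continuous_const
    have hGnorm : ∀ x : ℝ, ‖Complex.exp (Complex.I * x * ξ) * g x‖ = ‖g x‖ := by
      intro x
      rw [norm_mul, show Complex.I * (x:ℂ) * (ξ:ℂ) = Complex.I * ((x * ξ : ℝ) : ℂ)
        from by push_cast; ring, normExpI, one_mul]
    -- the dominating function
    set c : ℝ := Real.sqrt ε with hcdef
    have hc : 0 < c := Real.sqrt_pos.2 hε
    have hc2 : c^2 = ε := Real.sq_sqrt hε.le
    have hDeq : ∀ x : ℝ, 2 * K * (ε⁻¹ + x^2)⁻¹ = (2 * K * ε) * (1 + (c * x)^2)⁻¹ := by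
      intro x
      rw [mul_pow, hc2]
      have hne : (0:ℝ) < 1 + ε * x^2 := by positivity
      field_simp
    have hDint : Integrable (fun x : ℝ => 2 * K * (ε⁻¹ + x^2)⁻¹) := by
      have h1 : Integrable (fun x : ℝ => (1 + (c * x)^2)⁻¹) :=
        integrable_inv_one_add_sq.comp_mul_left' hc.ne'
      exact (h1.const_mul (2 * K * ε)).congr (ae_of_all _ fun x => (hDeq x).symm)
    have hDval : (∫ x : ℝ, 2 * K * (ε⁻¹ + x^2)⁻¹) = C' * Real.sqrt ε := by
      simp only [hDeq]
      rw [MeasureTheory.integral_const_mul,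
        MeasureTheory.Measure.integral_comp_mul_left (fun y : ℝ => (1 + y^2)⁻¹) c,
        integral_univ_inv_one_add_sq, smul_eq_mul,
        abs_of_pos (inv_pos.2 hc), hC'def, ← hcdef, ← hc2]
      field_simp
    have hGint : Integrable (fun x : ℝ => Complex.exp (Complex.I * x * ξ) * g x) := by
      apply Integrable.mono' hDint
      · apply Continuous.aestronglyMeasurable
        exact (Complex.continuous_exp.comp (by fun_prop)).mul hgcont
      · apply ae_of_all
        intro x
        rw [hGnorm x]
        exact hgD x
    calc ‖∫ x : ℝ, Complex.exp (Complex.I * x * ξ) * g x‖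
        ≤ ∫ x : ℝ, ‖Complex.exp (Complex.I * x * ξ) * g x‖ := norm_integral_le_integral_norm _
      _ ≤ ∫ x : ℝ, 2 * K * (ε⁻¹ + x^2)⁻¹ := by
          apply integral_mono hGint.norm hDint
          intro x
          beta_reduce
          rw [hGnorm x]
          exact hgD x
      _ = C' * Real.sqrt ε := hDval
  refine ⟨⟨C', hC', main⟩, ?_⟩
  intro s hs ξ
  apply squeeze_zero_norm' (a := fun ε => C' * Real.sqrt ε)
  · filter_upwards [eventually_mem_nhdsWithin] with ε (hε : ε ∈ Set.Ioi 0)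
    simpa using main s hs ε hε ξ
  · have h1 : Tendsto (fun ε : ℝ => C' * Real.sqrt ε) (nhds 0) (nhds 0) := by
      have := (Real.continuous_sqrt.tendsto 0).const_mul C'
      simpa using this
    exact h1.mono_left nhdsWithin_le_nhds
end

section
/- Let A be a nonnegative self-adjoint operator on L²(ℝ₊) and f a function in the domain of all powers of A, with Duhamel solution u(t) := ∫₀^t (sin((t−s)√A)/√A) F(s) ds for a continuous H-valued map F with F(0)=0. Then t∂_t applied to the spectral-side expression satisfies the integration-by-parts identity: (t∂_t − ξ∂_ξ − 1) ∫₀^t (sin((t−s)ξ)/ξ) G(s,ξ) ds = ∫₀^t (sin((t−s)ξ)/ξ)·(s∂_s − ξ∂_ξ − 1) G(s,ξ) ds + 2 ∫₀^t (sin((t−s)ξ)/ξ) G(s,ξ) ds, for every G ∈ C¹([0,∞)×(0,∞)) with G(0,ξ)=0 and suitable decay in ξ, and every t ≥ 0, ξ > 0. -/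
/-!
On the frequency side everything reduces to one-variable calculus for the kernel
`K(s) = sin((t - s)ξ)/ξ`. Since `K(t) = 0`, differentiating in the upper limit gives
`∂_t ∫₀ᵗ K G ds = ∫₀ᵗ cos((t - s)ξ) G ds`, while `ξ ∂_ξ K = (t - s) cos((t - s)ξ) - K`
(differentiation under the integral sign, justified by continuity of `∂_ξ G` on compacts).
After these substitutions the two sides differ by `∫₀ᵗ ∂_s (s K(s) G(s, ξ)) ds`, which vanishes
because `s K(s)` is zero at both ends `s = 0` and `s = t`.
-/

open MeasureTheory intervalIntegral Set
open scoped Interval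

section

variable {E : Type*} [NormedAddCommGroup E] [NormedSpace ℝ E] {n : WithTop ℕ∞}
  {G : ℝ → ℝ → E} {s₁ s₂ : Set ℝ} {x y : ℝ}

theorem ContDiffOn.slice_left (hG : ContDiffOn ℝ n (fun p : ℝ × ℝ => G p.1 p.2) (s₁ ×ˢ s₂))
    (hy : y ∈ s₂) : ContDiffOn ℝ n (G · y) s₁ :=
  hG.comp (contDiffOn_id.prodMk contDiffOn_const) fun _ hx => ⟨hx, hy⟩

theorem ContDiffOn.slice_right (hG : ContDiffOn ℝ n (fun p : ℝ × ℝ => G p.1 p.2) (s₁ ×ˢ s₂))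
    (hx : x ∈ s₁) : ContDiffOn ℝ n (G x ·) s₂ :=
  hG.comp (contDiffOn_const.prodMk contDiffOn_id) fun _ hy => ⟨hx, hy⟩

theorem ContDiffOn.continuousOn_deriv_slice_right
    (hG : ContDiffOn ℝ 1 (fun p : ℝ × ℝ => G p.1 p.2) (s₁ ×ˢ s₂)) (h₁ : UniqueDiffOn ℝ s₁)
    (h₂ : IsOpen s₂) : ContinuousOn (fun p : ℝ × ℝ => deriv (G p.1 ·) p.2) (s₁ ×ˢ s₂) := by
  have hcont : ContinuousOn
      (fun p => fderivWithin ℝ (fun p : ℝ × ℝ => G p.1 p.2) (s₁ ×ˢ s₂) p (0, 1)) (s₁ ×ˢ s₂) :=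
    (hG.continuousOn_fderivWithin (h₁.prod h₂.uniqueDiffOn) le_rfl).clm_apply continuousOn_const
  refine hcont.congr ?_
  rintro ⟨x, y⟩ ⟨hx, hy⟩
  have hF := ((hG.differentiableOn one_ne_zero) (x, y) ⟨hx, hy⟩).hasFDerivWithinAt
  have hslice := hF.comp_hasDerivWithinAt y ((hasDerivWithinAt_const y s₂ x).prodMk
    (hasDerivWithinAt_id y s₂)) fun _ hy' => mk_mem_prod hx hy'
  exact (hslice.hasDerivAt (h₂.mem_nhds hy)).deriv

theorem hasDerivAt_intervalIntegral_of_continuousOn_deriv {F F' : ℝ → ℝ → E} {a b c d x₀ : ℝ}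
    (hab : a ≤ b) (hx₀ : x₀ ∈ Ioo c d)
    (hF : ∀ x ∈ Ioo c d, ContinuousOn (F x) (Icc a b))
    (hF' : ContinuousOn (fun p : ℝ × ℝ => F' p.1 p.2) (Icc c d ×ˢ Icc a b))
    (hdiff : ∀ x ∈ Ioo c d, ∀ t ∈ Icc a b, HasDerivAt (F · t) (F' x t) x) :
    HasDerivAt (fun x => ∫ t in a..b, F x t) (∫ t in a..b, F' x₀ t) x₀ := by
  obtain ⟨M, hM⟩ := (isCompact_Icc.prod isCompact_Icc).exists_bound_of_continuousOn hF'
  have hIoc : Ι a b ⊆ Icc a b := by rw [uIoc_of_le hab]; exact Ioc_subset_Icc_self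
  have hF'x₀ : ContinuousOn (F' x₀) (Icc a b) :=
    hF'.comp (continuousOn_const.prodMk continuousOn_id) fun _ ht => ⟨Ioo_subset_Icc_self hx₀, ht⟩
  refine (hasDerivAt_integral_of_dominated_loc_of_deriv_le (bound := fun _ => M)
    (isOpen_Ioo.mem_nhds hx₀) ?_ ?_ ?_ ?_ intervalIntegrable_const ?_).2
  · filter_upwards [isOpen_Ioo.mem_nhds hx₀] with x hx
    exact ((hF x hx).mono hIoc).aestronglyMeasurable measurableSet_uIoc
  · exact (hF x₀ hx₀).intervalIntegrable_of_Icc hab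
  · exact (hF'x₀.mono hIoc).aestronglyMeasurable measurableSet_uIoc
  · exact Filter.Eventually.of_forall fun t ht x hx =>
      hM (x, t) ⟨Ioo_subset_Icc_self hx, hIoc ht⟩
  · exact Filter.Eventually.of_forall fun t ht x hx => hdiff x hx t (hIoc ht)

end

theorem hasDerivAt_sin_mul_div {a ζ : ℝ} (hζ : ζ ≠ 0) :
    HasDerivAt (fun ζ' => Real.sin (a * ζ') / ζ')
      ((a * Real.cos (a * ζ) - Real.sin (a * ζ) / ζ) / ζ) ζ :=
  (((hasDerivAt_id ζ).const_mul a).sin.div (hasDerivAt_id ζ) hζ).congr_deriv (by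
    simp only [id]; field_simp)

theorem hasDerivAt_duhamel_time {g : ℝ → ℂ} {t ξ : ℝ} (ht : 0 < t) (hξ : ξ ≠ 0)
    (hg : ContinuousOn g (Ici 0)) :
    HasDerivAt (fun t' => ∫ s in (0:ℝ)..t', ((Real.sin ((t' - s) * ξ) / ξ : ℝ) : ℂ) * g s)
      (∫ s in (0:ℝ)..t, ((Real.cos ((t - s) * ξ) : ℝ) : ℂ) * g s) t := by
  set C := fun u => ∫ s in (0:ℝ)..u, (Real.cos (s * ξ) : ℂ) * g s
  set S := fun u => ∫ s in (0:ℝ)..u, (Real.sin (s * ξ) : ℂ) * g s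
  have hcos : ContinuousOn (fun s => (Real.cos (s * ξ) : ℂ) * g s) (Ici 0) := by fun_prop
  have hsin : ContinuousOn (fun s => (Real.sin (s * ξ) : ℂ) * g s) (Ici 0) := by fun_prop
  have hint {φ : ℝ → ℂ} (hφ : ContinuousOn φ (Ici 0)) {u : ℝ} (hu : 0 ≤ u) :
      IntervalIntegrable φ volume 0 u :=
    (hφ.mono Icc_subset_Ici_self).intervalIntegrable_of_Icc hu
  have hC : HasDerivAt C ((Real.cos (t * ξ) : ℂ) * g t) t :=
    integral_hasDerivAt_right (hint hcos ht.le)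
      ((hcos.mono Ioi_subset_Ici_self).stronglyMeasurableAtFilter isOpen_Ioi t ht)
      (hcos.continuousAt (Ici_mem_nhds ht))
  have hS : HasDerivAt S ((Real.sin (t * ξ) : ℂ) * g t) t :=
    integral_hasDerivAt_right (hint hsin ht.le)
      ((hsin.mono Ioi_subset_Ici_self).stronglyMeasurableAtFilter isOpen_Ioi t ht)
      (hsin.continuousAt (Ici_mem_nhds ht))
  -- The addition formula for `sin` leaves `u` only in factors outside the integrals and in the
  -- upper limits, where the fundamental theorem of calculus applies.
  have hsplit : ∀ᶠ u in nhds t,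
      ((Real.sin (u * ξ) : ℂ) * C u - (Real.cos (u * ξ) : ℂ) * S u) / ξ
        = ∫ s in (0:ℝ)..u, ((Real.sin ((u - s) * ξ) / ξ : ℝ) : ℂ) * g s := by
    filter_upwards [Ioi_mem_nhds ht] with u hu
    rw [← intervalIntegral.integral_const_mul, ← intervalIntegral.integral_const_mul,
      ← integral_sub ((hint hcos hu.le).const_mul _) ((hint hsin hu.le).const_mul _),
      ← intervalIntegral.integral_div]
    refine integral_congr fun s _ => ?_
    simp only [sub_mul, Real.sin_sub]
    push_cast
    ring
  have hcos_sub : ∫ s in (0:ℝ)..t, ((Real.cos ((t - s) * ξ) : ℝ) : ℂ) * g s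
      = (Real.cos (t * ξ) : ℂ) * C t + (Real.sin (t * ξ) : ℂ) * S t := by
    rw [← intervalIntegral.integral_const_mul, ← intervalIntegral.integral_const_mul,
      ← integral_add ((hint hcos ht.le).const_mul _) ((hint hsin ht.le).const_mul _)]
    refine integral_congr fun s _ => ?_
    simp only [sub_mul, Real.cos_sub]
    push_cast
    ring
  have hd := ((((hasDerivAt_mul_const ξ).sin).ofReal_comp.mul hC).sub
    (((hasDerivAt_mul_const ξ).cos).ofReal_comp.mul hS)).div_const (ξ : ℂ)
  refine (hd.congr_of_eventuallyEq (hsplit.mono fun _ h => h.symm)).congr_deriv ?_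
  have hξ' : (ξ : ℂ) ≠ 0 := Complex.ofReal_ne_zero.mpr hξ
  rw [hcos_sub]
  field_simp
  push_cast
  ring

theorem hasDerivAt_duhamel_freq {G : ℝ → ℝ → ℂ} {t ξ : ℝ} (ht : 0 ≤ t)
    (hξ : 0 < ξ) (hG : ContDiffOn ℝ 1 (fun p : ℝ × ℝ => G p.1 p.2) (Ici 0 ×ˢ Ioi 0)) :
    HasDerivAt (fun ξ' => ∫ s in (0:ℝ)..t, ((Real.sin ((t - s) * ξ') / ξ' : ℝ) : ℂ) * G s ξ')
      (∫ s in (0:ℝ)..t,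
        ((((t - s) * Real.cos ((t - s) * ξ) - Real.sin ((t - s) * ξ) / ξ) / ξ : ℝ) : ℂ) * G s ξ
        + ((Real.sin ((t - s) * ξ) / ξ : ℝ) : ℂ) * deriv (G s ·) ξ) ξ := by
  have hsub : MapsTo Prod.swap (Icc (ξ / 2) (2 * ξ) ×ˢ Icc 0 t) (Ici 0 ×ˢ Ioi 0) :=
    fun p ⟨hp₁, hp₂⟩ => ⟨hp₂.1, (by linarith [hp₁.1] : (0:ℝ) < p.1)⟩
  have hGc : ContinuousOn (fun p : ℝ × ℝ => G p.2 p.1) (Icc (ξ / 2) (2 * ξ) ×ˢ Icc 0 t) :=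
    hG.continuousOn.comp continuous_swap.continuousOn hsub
  have hDc : ContinuousOn (fun p : ℝ × ℝ => deriv (G p.2 ·) p.1)
      (Icc (ξ / 2) (2 * ξ) ×ˢ Icc 0 t) :=
    (hG.continuousOn_deriv_slice_right (uniqueDiffOn_Ici 0) isOpen_Ioi).comp
      continuous_swap.continuousOn hsub
  have hpos {ζ : ℝ} (hζ : ζ ∈ Ioo (ξ / 2) (2 * ξ)) : 0 < ζ := by linarith [hζ.1]
  have hξmem : ξ ∈ Ioo (ξ / 2) (2 * ξ) := ⟨by linarith, by linarith⟩
  refine hasDerivAt_intervalIntegral_of_continuousOn_deriv (F' := fun ζ s =>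
      ((((t - s) * Real.cos ((t - s) * ζ) - Real.sin ((t - s) * ζ) / ζ) / ζ : ℝ) : ℂ) * G s ζ
        + ((Real.sin ((t - s) * ζ) / ζ : ℝ) : ℂ) * deriv (G s ·) ζ)
    ht hξmem (fun ζ hζ => ?_) ?_ (fun ζ hζ s hs => ?_)
  · have := (hG.slice_left (hpos hζ)).continuousOn.mono (Icc_subset_Ici_self : Icc 0 t ⊆ Ici 0)
    fun_prop
  · have hne : ∀ p ∈ Icc (ξ / 2) (2 * ξ) ×ˢ Icc 0 t, p.1 ≠ 0 := fun p hp =>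
      (by linarith [hp.1.1] : (0:ℝ) < p.1).ne'
    have hk : ContinuousOn (fun p : ℝ × ℝ => Real.sin ((t - p.2) * p.1) / p.1)
        (Icc (ξ / 2) (2 * ξ) ×ˢ Icc 0 t) := by fun_prop (disch := exact hne)
    have hk' : ContinuousOn (fun p : ℝ × ℝ =>
        ((t - p.2) * Real.cos ((t - p.2) * p.1) - Real.sin ((t - p.2) * p.1) / p.1) / p.1)
        (Icc (ξ / 2) (2 * ξ) ×ˢ Icc 0 t) := by fun_prop (disch := exact hne)
    exact ((Complex.continuous_ofReal.comp_continuousOn hk').mul hGc).add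
      ((Complex.continuous_ofReal.comp_continuousOn hk).mul hDc)
  · exact (hasDerivAt_sin_mul_div (hpos hζ).ne').ofReal_comp.mul
      (((hG.slice_right hs.1).differentiableOn one_ne_zero).differentiableAt
        (isOpen_Ioi.mem_nhds (hpos hζ))).hasDerivAt

theorem duhamel_scaling_identity {g g' h : ℝ → ℂ} {t ξ : ℝ} (ht : 0 ≤ t) (hξ : ξ ≠ 0)
    (hg : ContinuousOn g (Icc 0 t)) (hg' : ContinuousOn g' (Icc 0 t))
    (hh : ContinuousOn h (Icc 0 t)) (hderiv : ∀ s ∈ Ioo 0 t, HasDerivAt g (g' s) s) :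
    (t : ℂ) * (∫ s in (0:ℝ)..t, ((Real.cos ((t - s) * ξ) : ℝ) : ℂ) * g s)
      - (ξ : ℂ) * (∫ s in (0:ℝ)..t,
          ((((t - s) * Real.cos ((t - s) * ξ) - Real.sin ((t - s) * ξ) / ξ) / ξ : ℝ) : ℂ) * g s
          + ((Real.sin ((t - s) * ξ) / ξ : ℝ) : ℂ) * h s)
      - ∫ s in (0:ℝ)..t, ((Real.sin ((t - s) * ξ) / ξ : ℝ) : ℂ) * g s
    = (∫ s in (0:ℝ)..t, ((Real.sin ((t - s) * ξ) / ξ : ℝ) : ℂ) *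
          ((s : ℂ) * g' s - (ξ : ℂ) * h s - g s))
      + 2 * ∫ s in (0:ℝ)..t, ((Real.sin ((t - s) * ξ) / ξ : ℝ) : ℂ) * g s := by
  set K : ℝ → ℂ := fun s => ((Real.sin ((t - s) * ξ) / ξ : ℝ) : ℂ)
  set u : ℝ → ℂ := fun s => s * K s
  set u' : ℝ → ℂ := fun s => K s - s * ((Real.cos ((t - s) * ξ) : ℝ) : ℂ)
  have hu (s : ℝ) : HasDerivAt u (u' s) s := by
    have hK : HasDerivAt (fun s : ℝ => Real.sin ((t - s) * ξ) / ξ) (-Real.cos ((t - s) * ξ)) s :=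
      ((((hasDerivAt_id s).const_sub t).mul_const ξ).sin.div_const ξ).congr_deriv (by
        simp only [id]; field_simp)
    refine ((hasDerivAt_id s).ofReal_comp.mul hK.ofReal_comp).congr_deriv ?_
    simp only [u', K, id]
    push_cast
    ring
  rw [← uIcc_of_le ht] at hg hg' hh
  have hparts : ∫ s in (0:ℝ)..t, u' s * g s + u s * g' s = 0 := by
    rw [integral_deriv_mul_eq_sub_of_hasDerivAt (by fun_prop) hg (fun s _ => hu s)
      (by simpa [ht] using hderiv)
      ((by fun_prop : Continuous u').intervalIntegrable _ _) hg'.intervalIntegrable]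
    simp [u, K]
  -- Collected into one integral, the difference of the two sides is `-∫ (u g)'`.
  rw [eq_comm, ← intervalIntegral.integral_const_mul, ← intervalIntegral.integral_const_mul,
    ← intervalIntegral.integral_const_mul, ← intervalIntegral.integral_sub,
    ← intervalIntegral.integral_sub, ← intervalIntegral.integral_add, ← sub_eq_zero,
    ← intervalIntegral.integral_sub, ← hparts]
  · refine integral_congr fun s _ => ?_
    simp only [u, u', K]
    have hξ' : (ξ : ℂ) ≠ 0 := Complex.ofReal_ne_zero.mpr hξ
    push_cast
    field_simp
    ring
  all_goals exact ContinuousOn.intervalIntegrable (by fun_prop)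

theorem stmt19_general (G : ℝ → ℝ → ℂ)
    (hG : ContDiffOn ℝ 1 (fun p : ℝ × ℝ => G p.1 p.2) (Set.Ici 0 ×ˢ Set.Ioi 0)) :
    ∀ t ≥ (0:ℝ), ∀ ξ > (0:ℝ),
      (t : ℂ) * derivWithin
          (fun t' => ∫ s in (0:ℝ)..t', ((Real.sin ((t' - s) * ξ) / ξ : ℝ) : ℂ) * G s ξ)
          (Set.Ici 0) t
        - (ξ : ℂ) * deriv
            (fun ξ' => ∫ s in (0:ℝ)..t, ((Real.sin ((t - s) * ξ') / ξ' : ℝ) : ℂ) * G s ξ') ξ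
        - ∫ s in (0:ℝ)..t, ((Real.sin ((t - s) * ξ) / ξ : ℝ) : ℂ) * G s ξ
      = (∫ s in (0:ℝ)..t, ((Real.sin ((t - s) * ξ) / ξ : ℝ) : ℂ) *
            ((s : ℂ) * derivWithin (fun s' => G s' ξ) (Set.Ici 0) s
              - (ξ : ℂ) * deriv (fun ξ' => G s ξ') ξ - G s ξ))
        + 2 * ∫ s in (0:ℝ)..t, ((Real.sin ((t - s) * ξ) / ξ : ℝ) : ℂ) * G s ξ := by
  intro t ht ξ hξ
  rcases ht.eq_or_lt with rfl | ht
  · simp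
  have hGξ := hG.slice_left hξ
  rw [derivWithin_of_mem_nhds (Ici_mem_nhds ht),
    (hasDerivAt_duhamel_time ht hξ.ne' hGξ.continuousOn).deriv,
    (hasDerivAt_duhamel_freq ht.le hξ hG).deriv]
  refine duhamel_scaling_identity ht.le hξ.ne' (hGξ.continuousOn.mono Icc_subset_Ici_self)
    ((hGξ.continuousOn_derivWithin (uniqueDiffOn_Ici 0) le_rfl).mono Icc_subset_Ici_self) ?_
    fun s hs => ?_
  · exact (hG.continuousOn_deriv_slice_right (uniqueDiffOn_Ici 0) isOpen_Ioi).comp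
      (continuousOn_id.prodMk continuousOn_const) fun s hs => ⟨hs.1, hξ⟩
  · rw [derivWithin_of_mem_nhds (Ici_mem_nhds hs.1)]
    exact ((hGξ.differentiableOn one_ne_zero).differentiableAt (Ici_mem_nhds hs.1)).hasDerivAt

/-- The scaling vector field essentially commutes with the Duhamel integral on the
Fourier side: for `G ∈ C¹([0,∞)×(0,∞))` with `G(0,ξ) = 0`,
`(t∂_t − ξ∂_ξ − 1)∫₀^t (sin((t−s)ξ)/ξ) G(s,ξ) ds
 = ∫₀^t (sin((t−s)ξ)/ξ)(s∂_s − ξ∂_ξ − 1)G(s,ξ) ds + 2∫₀^t (sin((t−s)ξ)/ξ) G(s,ξ) ds`. -/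
theorem stmt19 (G : ℝ → ℝ → ℂ)
    (hG : ContDiffOn ℝ 1 (fun p : ℝ × ℝ => G p.1 p.2) (Set.Ici 0 ×ˢ Set.Ioi 0))
    (hG0 : ∀ ξ > (0:ℝ), G 0 ξ = 0) :
    ∀ t ≥ (0:ℝ), ∀ ξ > (0:ℝ),
      (t : ℂ) * derivWithin
          (fun t' => ∫ s in (0:ℝ)..t', ((Real.sin ((t' - s) * ξ) / ξ : ℝ) : ℂ) * G s ξ)
          (Set.Ici 0) t
        - (ξ : ℂ) * deriv
            (fun ξ' => ∫ s in (0:ℝ)..t, ((Real.sin ((t - s) * ξ') / ξ' : ℝ) : ℂ) * G s ξ') ξ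
        - ∫ s in (0:ℝ)..t, ((Real.sin ((t - s) * ξ) / ξ : ℝ) : ℂ) * G s ξ
      = (∫ s in (0:ℝ)..t, ((Real.sin ((t - s) * ξ) / ξ : ℝ) : ℂ) *
            ((s : ℂ) * derivWithin (fun s' => G s' ξ) (Set.Ici 0) s
              - (ξ : ℂ) * deriv (fun ξ' => G s ξ') ξ - G s ξ))
        + 2 * ∫ s in (0:ℝ)..t, ((Real.sin ((t - s) * ξ) / ξ : ℝ) : ℂ) * G s ξ :=
  stmt19_general G hG
end
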